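/- Let S_1,…,S_n, S_{n+1} be exchangeable real-valued random variables with almost surely no ties (continuous joint distribution), and let Q = Quantile_{1−ε}({S_1,…,S_n} ∪ {∞}). Then P(S_{n+1} ≤ Q) = ⌈(1−ε)(n+1)⌉/(n+1) < 1 − ε + 1/(n+1). -/

import Mathlib

/-!
Off a null set the scores are distinct. Then `S_{n+1} ≤ Q` holds exactly when fewer than
`k = ⌈(1-ε)(n+1)⌉` of the other scores lie strictly below `S_{n+1}` (the appended `∞` never
does), i.e. when the rank of `S_{n+1}` among all `n + 1` scores is below `k`. By exchangeability
every index has the same probability of rank below `k`, and for distinct scores exactly `k`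
indices have rank below `k`; hence `(n + 1) P(S_{n+1} ≤ Q) = k`.
-/

open MeasureTheory

/-- The `k`-th smallest element of a list of extended reals (`⊤` if out of range). -/
noncomputable def orderStat (l : List EReal) (k : ℕ) : EReal :=
  (l.mergeSort (fun a b => decide (a ≤ b))).getD (k - 1) ⊤

open Finset
open scoped ENNReal

theorem List.countP_ofFn {α : Type*} {n : ℕ} (f : Fin n → α) (p : α → Bool) :
    (List.ofFn f).countP p = #{i | p (f i)} := by
  rw [card_def, filter_val, ← Multiset.countP_map f _ (p · = true), Fin.univ_val_map]
  simp only [Multiset.coe_countP, Bool.decide_eq_true]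

theorem List.countP_eq_card_filter_getElem {α : Type*} (l : List α) (p : α → Bool) :
    l.countP p = #{i : Fin l.length | p l[i]} := by
  conv_lhs => rw [← List.ofFn_getElem (xs := l), List.countP_ofFn]
  rfl

theorem List.SortedLE.le_getD_top_iff {α : Type*} [LinearOrder α] [OrderTop α] {m : List α}
    (hm : m.SortedLE) (a : α) {k : ℕ} (hk : 0 < k) :
    a ≤ m.getD (k - 1) ⊤ ↔ m.countP (· < a) < k := by
  by_cases hkm : k - 1 < m.length
  · have hdown : ∀ i j : Fin m.length, j ≤ i → m[i] < a → m[j] < a :=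
      fun i j hji hi => (hm.monotone_get hji).trans_lt hi
    have := Fin.lt_card_filter_univ_iff_apply_of_imp (j := ⟨k - 1, hkm⟩) _ hdown
    rw [List.getD_eq_getElem _ _ hkm, ← not_lt, m.countP_eq_card_filter_getElem]
    simp only [Fin.getElem_fin, decide_eq_true_eq] at this ⊢
    rw [← this]
    omega
  · have := m.countP_le_length (p := (· < a))
    simp only [List.getD_eq_getElem?_getD, List.getElem?_eq_none (not_lt.mp hkm),
      Option.getD_none, le_top, true_iff]
    omega

theorem le_orderStat_iff (l : List EReal) (a : EReal) {k : ℕ} (hk : 0 < k) :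
    a ≤ orderStat l k ↔ l.countP (· < a) < k := by
  rw [orderStat, List.sortedLE_mergeSort.le_getD_top_iff a hk,
    (l.mergeSort_perm fun a b => decide (a ≤ b)).countP_eq]

/-- Zero-based: a minimal coordinate has rank `0`. -/
def rank {ι α : Type*} [Fintype ι] [LinearOrder α] (x : ι → α) (j : ι) : ℕ := #{i | x i < x j}

section Rank

variable {ι α : Type*} [Fintype ι] [LinearOrder α]

theorem rank_comp_perm (x : ι → α) (σ : Equiv.Perm ι) (j : ι) :
    rank (fun i => x (σ i)) j = rank x (σ j) :=
  card_equiv σ (by simp)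

theorem rank_lt_card (x : ι → α) (j : ι) : rank x j < Fintype.card ι :=
  card_lt_univ_of_notMem (x := j) (by simp)

theorem rank_lt_rank {x : ι → α} {i j : ι} (h : x i < x j) : rank x i < rank x j := by
  refine card_lt_card ((ssubset_iff_of_subset fun l hl => ?_).mpr ⟨i, by simp [h]⟩)
  simp only [mem_filter, mem_univ, true_and] at hl ⊢
  exact hl.trans h

theorem rank_injective {x : ι → α} (hx : Function.Injective x) : Function.Injective (rank x) := by
  intro i j hij
  by_contra hne
  rcases lt_or_gt_of_ne (hx.ne hne) with h | h
  · exact (rank_lt_rank h).ne hij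
  · exact (rank_lt_rank h).ne' hij

theorem image_rank {x : ι → α} (hx : Function.Injective x) :
    univ.image (rank x) = range (Fintype.card ι) :=
  eq_of_subset_of_card_le (fun r hr => by
      obtain ⟨j, -, rfl⟩ := mem_image.mp hr
      exact mem_range.mpr (rank_lt_card x j))
    (by rw [card_image_of_injective _ (rank_injective hx), card_range, card_univ])

theorem card_rank_lt {x : ι → α} (hx : Function.Injective x) (k : ℕ) :
    #{j | rank x j < k} = min k (Fintype.card ι) := by
  rw [← card_image_of_injective _ (rank_injective hx), ← filter_image (p := (· < k)),
    image_rank hx, ← card_range (min k _)]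
  congr 1
  ext r
  simp only [mem_filter, mem_range]
  omega

end Rank

theorem rank_last {α : Type*} [LinearOrder α] {n : ℕ} (x : Fin (n + 1) → α) :
    rank x (Fin.last n) = #{i : Fin n | x i.castSucc < x (Fin.last n)} := by
  rw [rank, card_filter, card_filter, Fin.sum_univ_castSucc]
  simp

theorem coe_le_orderStat_iff_rank_lt {n k : ℕ} (x : Fin (n + 1) → ℝ) (hk : 0 < k) :
    (x (Fin.last n) : EReal) ≤
        orderStat ((List.ofFn fun i : Fin n => (x i.castSucc : EReal)) ++ [⊤]) k ↔
      rank x (Fin.last n) < k := by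
  rw [le_orderStat_iff _ _ hk]
  simp [List.countP_ofFn, rank_last]

section Exchangeable

variable {Ω ι α : Type*} [MeasurableSpace Ω] {μ : Measure Ω} [Fintype ι]
  [LinearOrder α] [MeasurableSpace α] [TopologicalSpace α] [OpensMeasurableSpace α]
  [OrderClosedTopology α] [SecondCountableTopology α]

theorem measurable_rank (j : ι) : Measurable fun x : ι → α => rank x j := by
  simp_rw [rank, card_filter]
  exact Finset.measurable_sum _ fun i _ => Measurable.ite
    (measurableSet_lt (measurable_pi_apply i) (measurable_pi_apply j)) measurable_const
    measurable_const

open scoped Classical in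
theorem sum_measure_eq_of_ae_card_eq {A : ι → Set Ω} (hA : ∀ j, MeasurableSet (A j)) {c : ℕ}
    (hc : ∀ᵐ ω ∂μ, #{j | ω ∈ A j} = c) : ∑ j, μ (A j) = c * μ Set.univ := by
  calc ∑ j, μ (A j) = ∑ j, ∫⁻ ω, (A j).indicator 1 ω ∂μ := by
        simp only [lintegral_indicator_one (hA _)]
  _ = ∫⁻ ω, ∑ j, (A j).indicator 1 ω ∂μ :=
        (lintegral_finsetSum _ fun j _ => measurable_one.indicator (hA j)).symm
  _ = ∫⁻ _, (c : ℝ≥0∞) ∂μ := lintegral_congr_ae <| hc.mono fun ω hω => by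
        simp [Set.indicator_apply, ← hω]
  _ = c * μ Set.univ := lintegral_const _

theorem measure_rank_lt_eq_of_exchangeable {X : Ω → ι → α} (hX : Measurable X)
    (hexch : ∀ σ : Equiv.Perm ι, μ.map (fun ω i => X ω (σ i)) = μ.map X) (i j : ι) (k : ℕ) :
    μ {ω | rank (X ω) i < k} = μ {ω | rank (X ω) j < k} := by
  classical
  have hB : MeasurableSet {x : ι → α | rank x j < k} := measurable_rank j measurableSet_Iio
  have hswap : {ω | rank (X ω) i < k}
      = (fun ω l => X ω (Equiv.swap i j l)) ⁻¹' {x | rank x j < k} := by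
    ext ω
    simp [rank_comp_perm]
  rw [hswap, ← Measure.map_apply (by fun_prop) hB, hexch, Measure.map_apply hX hB]
  rfl

theorem card_mul_measure_rank_lt [IsProbabilityMeasure μ] {X : Ω → ι → α} (hX : Measurable X)
    (hexch : ∀ σ : Equiv.Perm ι, μ.map (fun ω i => X ω (σ i)) = μ.map X)
    (hinj : ∀ᵐ ω ∂μ, Function.Injective (X ω)) (j : ι) (k : ℕ) :
    Fintype.card ι * μ {ω | rank (X ω) j < k} = min k (Fintype.card ι) := by
  classical
  have hA : ∀ i, MeasurableSet {ω | rank (X ω) i < k} :=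
    fun i => (measurable_rank i).comp hX measurableSet_Iio
  have hsum := sum_measure_eq_of_ae_card_eq hA (hinj.mono fun ω hω => by
    simpa using card_rank_lt hω k)
  simp_rw [measure_rank_lt_eq_of_exchangeable hX hexch _ j k] at hsum
  simpa using hsum

end Exchangeable

/-- Exact conformal coverage under no ties: if `S 0, …, S n` are exchangeable
with almost surely no ties and `Q` is the `⌈(1−ε)(n+1)⌉`-th smallest value of
the first `n` scores augmented with `∞`, then
`P(S_{n+1} ≤ Q) = ⌈(1−ε)(n+1)⌉/(n+1) < 1 − ε + 1/(n+1)`. -/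
theorem conformal_quantile_exact_coverage
    {Ω : Type*} [MeasurableSpace Ω] (P : Measure Ω) [IsProbabilityMeasure P]
    (n : ℕ) (S : Fin (n + 1) → Ω → ℝ) (hmeas : ∀ i, Measurable (S i))
    (hexch : ∀ σ : Equiv.Perm (Fin (n + 1)),
      Measure.map (fun ω => fun i => S (σ i) ω) P
        = Measure.map (fun ω => fun i => S i ω) P)
    (hties : P {ω | ∃ i j : Fin (n + 1), i ≠ j ∧ S i ω = S j ω} = 0)
    (ε : ℝ) (hε0 : 0 < ε) (hε1 : ε < 1) :
    P {ω | (S (Fin.last n) ω : EReal) ≤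
        orderStat
          ((List.ofFn fun i : Fin n => ((S i.castSucc ω : ℝ) : EReal)) ++ [⊤])
          (⌈(1 - ε) * (n + 1)⌉.toNat)}
      = ENNReal.ofReal ((⌈(1 - ε) * (n + 1)⌉.toNat : ℝ) / (n + 1)) ∧
    ((⌈(1 - ε) * (n + 1)⌉.toNat : ℝ) / (n + 1)) < 1 - ε + 1 / (n + 1) := by
  simp only [Int.ceil_toNat]
  set k := ⌈(1 - ε) * ((n : ℝ) + 1)⌉₊
  have hq : 0 < (1 - ε) * ((n : ℝ) + 1) := mul_pos (by linarith) (by positivity)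
  have hk_pos : 0 < k := Nat.ceil_pos.mpr hq
  have hk_le : k ≤ n + 1 := Nat.ceil_le.mpr (by push_cast; nlinarith)
  have hk_lt : (k : ℝ) < (1 - ε) * (n + 1) + 1 := Nat.ceil_lt_add_one hq.le
  have hinj : ∀ᵐ ω ∂P, Function.Injective fun i => S i ω :=
    (measure_eq_zero_iff_ae_notMem.mp hties).mono fun ω hω i j hij =>
      not_not.mp fun hne => hω ⟨i, j, hne, hij⟩
  have hcover : {ω | (S (Fin.last n) ω : EReal) ≤
      orderStat ((List.ofFn fun i : Fin n => ((S i.castSucc ω : ℝ) : EReal)) ++ [⊤]) k}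
      = {ω | rank (fun i => S i ω) (Fin.last n) < k} := by
    ext ω
    exact coe_le_orderStat_iff_rank_lt (fun i => S i ω) hk_pos
  have hmass := card_mul_measure_rank_lt (measurable_pi_lambda _ hmeas) hexch hinj (Fin.last n) k
  rw [Fintype.card_fin, min_eq_left hk_le] at hmass
  refine ⟨?_, ?_⟩
  · rw [hcover, show (n : ℝ) + 1 = (n + 1 : ℕ) by push_cast; rfl,
      ENNReal.ofReal_div_of_pos (by positivity), ENNReal.ofReal_natCast, ENNReal.ofReal_natCast,
      ENNReal.eq_div_iff (by simp) (by simp), hmass]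
  · calc (k : ℝ) / (n + 1) < ((1 - ε) * (n + 1) + 1) / (n + 1) := by gcongr
    _ = 1 - ε + 1 / (n + 1) := by field_simp
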